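/- arXiv:2006.06671 — 4 statements merged into one kernel-verified Lean document; each statement's English description precedes it below -/
import Mathlib

section
/- Let ρ₀, ρ₁, ρ₂ be the 3×3 complex diagonal matrices ρ₀ = diag(1/2, 0, 1/2), ρ₁ = diag(0, 1/2, 1/2), ρ₂ = diag(1/2, 1/2, 0). Then: (i) for all positive semidefinite 3×3 complex matrices E₀, E₁, E₂ with E₀ + E₁ + E₂ = I, the real part of (1/3)·(Tr(E₀ρ₀) + Tr(E₁ρ₁) + Tr(E₂ρ₂)) is at most 1/2; and (ii) there exist positive semidefinite 3×3 complex matrices E₀, E₁, E₂ with E₀ + E₁ + E₂ = I achieving (1/3)·(Tr(E₀ρ₀) + Tr(E₁ρ₁) + Tr(E₂ρ₂)) = 1/2. -/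
open Matrix
open scoped ComplexOrder

/-!
Each state satisfies `ρ_b ≤ ½ • 1` in the Loewner order, so `Tr(E_b ρ_b) ≤ ½ Tr E_b` for every
POVM element, and summing over `b` gives at most `½ Tr 1 = 3/2`. The bound is attained by measuring
in the computational basis and guessing, on each outcome, a state whose support contains it.
-/

namespace Matrix

variable {𝕜 n : Type*} [RCLike 𝕜]

theorem posSemidef_smul_one_sub_diagonal [DecidableEq n] {c : 𝕜} {d : n → 𝕜}
    (hd : ∀ i, d i ≤ c) : (c • 1 - diagonal d).PosSemidef := by
  rw [smul_one_eq_diagonal, diagonal_sub]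
  exact PosSemidef.diagonal fun i ↦ sub_nonneg.mpr (hd i)

variable [Fintype n]

theorem PosSemidef.trace_mul_nonneg {A B : Matrix n n 𝕜} (hA : A.PosSemidef)
    (hB : B.PosSemidef) : 0 ≤ (A * B).trace := by
  classical
  open scoped MatrixOrder Matrix.Norms.L2Operator in
  obtain ⟨C, rfl⟩ := CStarAlgebra.nonneg_iff_eq_star_mul_self.mp hB.nonneg
  rw [star_eq_conjTranspose, ← mul_assoc, trace_mul_cycle]
  exact (hA.mul_mul_conjTranspose_same C).trace_nonneg

variable [DecidableEq n]

theorem PosSemidef.trace_mul_le_of_posSemidef_smul_one_sub {E ρ : Matrix n n 𝕜} {c : 𝕜}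
    (hE : E.PosSemidef) (hρ : (c • 1 - ρ).PosSemidef) : (E * ρ).trace ≤ c * E.trace := by
  have := hE.trace_mul_nonneg hρ
  rwa [mul_sub, trace_sub, mul_smul_comm, mul_one, trace_smul, smul_eq_mul, sub_nonneg] at this

theorem sum_trace_mul_le_of_posSemidef_smul_one_sub {ι : Type*} [Fintype ι]
    {E ρ : ι → Matrix n n 𝕜} {c : 𝕜} (hE : ∀ i, (E i).PosSemidef) (hE_sum : ∑ i, E i = 1)
    (hρ : ∀ i, (c • 1 - ρ i).PosSemidef) :
    ∑ i, (E i * ρ i).trace ≤ c * Fintype.card n := calc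
  ∑ i, (E i * ρ i).trace ≤ ∑ i, c * (E i).trace :=
    Finset.sum_le_sum fun i _ ↦ (hE i).trace_mul_le_of_posSemidef_smul_one_sub (hρ i)
  _ = c * Fintype.card n := by rw [← Finset.mul_sum, ← trace_sum, hE_sum, trace_one]

end Matrix

/-- The state-discrimination SDP for Protocol 2 has optimal value 1/2:
for the three states `ρ_b = Tr_Y |ψ_b⁺⟩⟨ψ_b⁺|` (qutrit diagonal matrices),
every POVM `{E₀, E₁, E₂}` has success probability at most `1/2`, and some POVM
achieves `1/2`. -/
theorem stmt_6
    (ρ₀ ρ₁ ρ₂ : Matrix (Fin 3) (Fin 3) ℂ)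
    (hρ₀ : ρ₀ = !![1/2, 0, 0; 0, 0, 0; 0, 0, 1/2])
    (hρ₁ : ρ₁ = !![0, 0, 0; 0, 1/2, 0; 0, 0, 1/2])
    (hρ₂ : ρ₂ = !![1/2, 0, 0; 0, 1/2, 0; 0, 0, 0]) :
    (∀ E₀ E₁ E₂ : Matrix (Fin 3) (Fin 3) ℂ,
      E₀.PosSemidef → E₁.PosSemidef → E₂.PosSemidef → E₀ + E₁ + E₂ = 1 →
      ((1 / 3 : ℂ) * ((E₀ * ρ₀).trace + (E₁ * ρ₁).trace + (E₂ * ρ₂).trace)).re ≤ 1 / 2) ∧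
    (∃ E₀ E₁ E₂ : Matrix (Fin 3) (Fin 3) ℂ,
      E₀.PosSemidef ∧ E₁.PosSemidef ∧ E₂.PosSemidef ∧ E₀ + E₁ + E₂ = 1 ∧
      (1 / 3 : ℂ) * ((E₀ * ρ₀).trace + (E₁ * ρ₁).trace + (E₂ * ρ₂).trace) = 1 / 2) := by
  rw [← diagonal_vec3] at hρ₀ hρ₁ hρ₂
  subst hρ₀ hρ₁ hρ₂
  refine ⟨fun E₀ E₁ E₂ h₀ h₁ h₂ hE_sum ↦ ?_, ?_⟩
  · have hρ : ∀ b, ((1 / 2 : ℂ) • 1 - (![diagonal ![1/2, 0, 1/2], diagonal ![0, 1/2, 1/2],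
        diagonal ![1/2, 1/2, 0]] : Fin 3 → Matrix (Fin 3) (Fin 3) ℂ) b).PosSemidef := by
      intro b
      fin_cases b <;>
        exact posSemidef_smul_one_sub_diagonal fun i ↦ by fin_cases i <;> norm_num [Complex.le_def]
    have hsum := sum_trace_mul_le_of_posSemidef_smul_one_sub (E := ![E₀, E₁, E₂])
      (fun b ↦ by fin_cases b <;> assumption) (by simpa [Fin.sum_univ_three] using hE_sum) hρ
    simp only [Fin.sum_univ_three, Fintype.card_fin, cons_val_zero, cons_val_one, cons_val_two,
      tail_cons, head_cons] at hsum
    have hsuccess := mul_le_mul_of_nonneg_left hsum (by norm_num [Complex.le_def] : (0 : ℂ) ≤ 1 / 3)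
    norm_num at hsuccess
    exact (Complex.le_def.mp hsuccess).1.trans_eq (by norm_num)
  · refine ⟨diagonal ![0, 0, 1], diagonal ![0, 1, 0], diagonal ![1, 0, 0],
      .diagonal (by simp [Pi.le_def, Fin.forall_fin_succ]),
      .diagonal (by simp [Pi.le_def, Fin.forall_fin_succ]),
      .diagonal (by simp [Pi.le_def, Fin.forall_fin_succ]), ?_, ?_⟩
    · simp [diagonal_add, ← diagonal_one, Fin.forall_fin_succ]
    · simp [Fin.sum_univ_three]
      norm_num
end

section
/- There do not exist functions x : {0,1,2} → {0,1}³ and y : {0,1,2} → {0,1}³ such that x(a)₀ ⊕ x(a)₁ ⊕ x(a)₂ = 0 for all a ∈ {0,1,2}, y(b)₀ ⊕ y(b)₁ ⊕ y(b)₂ = 1 for all b ∈ {0,1,2}, and x(a)_b = y(b)_a for all a, b ∈ {0,1,2}. Consequently, for any such pair of functions satisfying the two parity constraints, the number of pairs (a,b) ∈ {0,1,2}² with x(a)_b = y(b)_a is at most 8; i.e., every deterministic classical strategy wins the magic square game with probability at most 8/9 under uniformly random inputs. -/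
lemma magic_aux : ¬ ∃ x y : Fin 3 → Fin 3 → Bool,
      (∀ a : Fin 3, xor (x a 0) (xor (x a 1) (x a 2)) = false) ∧
      (∀ b : Fin 3, xor (y b 0) (xor (y b 1) (y b 2)) = true) ∧
      (∀ a b : Fin 3, x a b = y b a) := by
  rintro ⟨x, y, h1, h2, h3⟩
  have r0 := h1 0; have r1 := h1 1; have r2 := h1 2
  have c0 := h2 0; have c1 := h2 1; have c2 := h2 2
  rw [h3, h3, h3] at r0 r1 r2
  revert r0 r1 r2 c0 c1 c2
  generalize y 0 0 = b00
  generalize y 0 1 = b01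
  generalize y 0 2 = b02
  generalize y 1 0 = b10
  generalize y 1 1 = b11
  generalize y 1 2 = b12
  generalize y 2 0 = b20
  generalize y 2 1 = b21
  generalize y 2 2 = b22
  revert b00 b01 b02 b10 b11 b12 b20 b21 b22
  decide

/-- No deterministic classical strategy wins the magic square game perfectly,
and consequently every deterministic strategy satisfying the parity constraints
wins on at most 8 of the 9 input pairs (probability at most 8/9 under uniform
inputs). Alice's output on input `a` is the triple `x a : Fin 3 → Bool` with even
parity; Bob's output on input `b` is `y b : Fin 3 → Bool` with odd parity; they
win on `(a, b)` iff `x a b = y b a`. -/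
theorem stmt_7 :
    (¬ ∃ x y : Fin 3 → Fin 3 → Bool,
      (∀ a : Fin 3, xor (x a 0) (xor (x a 1) (x a 2)) = false) ∧
      (∀ b : Fin 3, xor (y b 0) (xor (y b 1) (y b 2)) = true) ∧
      (∀ a b : Fin 3, x a b = y b a)) ∧
    (∀ x y : Fin 3 → Fin 3 → Bool,
      (∀ a : Fin 3, xor (x a 0) (xor (x a 1) (x a 2)) = false) →
      (∀ b : Fin 3, xor (y b 0) (xor (y b 1) (y b 2)) = true) →
      (Finset.univ.filter (fun p : Fin 3 × Fin 3 => x p.1 p.2 = y p.2 p.1)).card ≤ 8) := by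
  refine ⟨magic_aux, ?_⟩
  intro x y hx hy
  by_contra h
  push_neg at h
  have hle : (Finset.univ.filter (fun p : Fin 3 × Fin 3 => x p.1 p.2 = y p.2 p.1)).card ≤ 9 := by
    calc _ ≤ (Finset.univ : Finset (Fin 3 × Fin 3)).card := Finset.card_le_univ _
    _ = 9 := by simp
  have h9 : (Finset.univ.filter (fun p : Fin 3 × Fin 3 => x p.1 p.2 = y p.2 p.1)).card = 9 := by omega
  have heq : (Finset.univ.filter (fun p : Fin 3 × Fin 3 => x p.1 p.2 = y p.2 p.1)) = Finset.univ := by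
    apply Finset.eq_univ_of_card
    simp [h9]
  have hall : ∀ a b : Fin 3, x a b = y b a := by
    intro a b
    have : (a, b) ∈ Finset.univ.filter (fun p : Fin 3 × Fin 3 => x p.1 p.2 = y p.2 p.1) := by
      rw [heq]; exact Finset.mem_univ _
    simpa using (Finset.mem_filter.mp this).2
  exact magic_aux ⟨x, y, hx, hy, hall⟩
end

section
/- For every a, b ∈ {0,1,2}: the sum over all (x₀,x₁) ∈ {0,1}² and (y₀,y₁) ∈ {0,1}² such that x_b = y_a — where x = (x₀, x₁, x₀⊕x₁) and y = (y₀, y₁, y₀⊕y₁⊕1) — of ⟨Ψ| (M_{x₀x₁|a} ⊗ N_{y₀y₁|b}) |Ψ⟩ equals 1. That is, the ideal magic square strategy wins the magic square game with probability 1 on every input pair. -/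
open Matrix
open scoped Matrix Kronecker

noncomputable section

/-- Rank-1 projector onto `|0⟩`. -/
def P0 : Matrix (Fin 2) (Fin 2) ℂ := !![1, 0; 0, 0]
/-- Rank-1 projector onto `|1⟩`. -/
def P1 : Matrix (Fin 2) (Fin 2) ℂ := !![0, 0; 0, 1]
/-- Rank-1 projector onto `|+⟩ = (|0⟩+|1⟩)/√2`. -/
def Pp : Matrix (Fin 2) (Fin 2) ℂ := !![1/2, 1/2; 1/2, 1/2]
/-- Rank-1 projector onto `|−⟩ = (|0⟩−|1⟩)/√2`. -/
def Pm : Matrix (Fin 2) (Fin 2) ℂ := !![1/2, -(1/2); -(1/2), 1/2]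
/-- Rank-1 projector onto `|+i⟩ = (|0⟩+i|1⟩)/√2`. -/
def Ppi : Matrix (Fin 2) (Fin 2) ℂ := !![1/2, -(Complex.I/2); Complex.I/2, 1/2]
/-- Rank-1 projector onto `|−i⟩ = (|0⟩−i|1⟩)/√2`. -/
def Pmi : Matrix (Fin 2) (Fin 2) ℂ := !![1/2, Complex.I/2; -(Complex.I/2), 1/2]

/-- The 4×4 magic-square projectors `Π⁰_{ab}` (outcome 0), for `a, b ∈ {0,1,2}`. -/
def Pi0 : Fin 3 → Fin 3 → Matrix (Fin 2 × Fin 2) (Fin 2 × Fin 2) ℂ :=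
  ![![P0 ⊗ₖ (1 : Matrix (Fin 2) (Fin 2) ℂ),
     (1 : Matrix (Fin 2) (Fin 2) ℂ) ⊗ₖ P0,
     P0 ⊗ₖ P0 + P1 ⊗ₖ P1],
    ![(1 : Matrix (Fin 2) (Fin 2) ℂ) ⊗ₖ Pp,
     Pp ⊗ₖ (1 : Matrix (Fin 2) (Fin 2) ℂ),
     Pp ⊗ₖ Pp + Pm ⊗ₖ Pm],
    ![P1 ⊗ₖ Pp + P0 ⊗ₖ Pm,
     Pp ⊗ₖ P1 + Pm ⊗ₖ P0,
     Ppi ⊗ₖ Ppi + Pmi ⊗ₖ Pmi]]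

/-- `Π^e_{ab}`: outcome-`e` projector (`e : Bool`, with `Π¹ = 1 − Π⁰`). -/
def Pi' (e : Bool) (a b : Fin 3) : Matrix (Fin 2 × Fin 2) (Fin 2 × Fin 2) ℂ :=
  if e then 1 - Pi0 a b else Pi0 a b

/-- Alice's magic-square measurement operators `M_{x₀x₁|a} = Π^{x₀}_{a0} Π^{x₁}_{a1}`. -/
def Mms (a : Fin 3) (x0 x1 : Bool) : Matrix (Fin 2 × Fin 2) (Fin 2 × Fin 2) ℂ :=
  Pi' x0 a 0 * Pi' x1 a 1

/-- Bob's magic-square measurement operators `N_{y₀y₁|b} = Π^{y₀}_{0b} Π^{y₁}_{1b}`. -/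
def Nms (b : Fin 3) (y0 y1 : Bool) : Matrix (Fin 2 × Fin 2) (Fin 2 × Fin 2) ℂ :=
  Pi' y0 0 b * Pi' y1 1 b

/-- The maximally entangled state `|Ψ⟩ = (1/2) ∑_{ij} |ij⟩ ⊗ |ij⟩` on `ℂ⁴ ⊗ ℂ⁴`. -/
def PsiMS : (Fin 2 × Fin 2) × (Fin 2 × Fin 2) → ℂ :=
  fun p => if p.1 = p.2 then 1 / 2 else 0

/-- The expectation value `⟨Ψ| A |Ψ⟩` of a 16×16 operator in the state `|Ψ⟩`. -/
def expecMS
    (A : Matrix ((Fin 2 × Fin 2) × (Fin 2 × Fin 2)) ((Fin 2 × Fin 2) × (Fin 2 × Fin 2)) ℂ) : ℂ :=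
  star PsiMS ⬝ᵥ (A *ᵥ PsiMS)

/-- Alice's full output triple `x = (x₀, x₁, x₀ ⊕ x₁)`. -/
def xtrip (x0 x1 : Bool) : Fin 3 → Bool := ![x0, x1, xor x0 x1]

/-- Bob's full output triple `y = (y₀, y₁, y₀ ⊕ y₁ ⊕ 1)`. -/
def ytrip (y0 y1 : Bool) : Fin 3 → Bool := ![y0, y1, !(xor y0 y1)]

end

/-! Write `Π⁰_{ab} = (1 + O_{ab}) / 2`. The observables `O_{ab}` form the Mermin–Peres square of
two-qubit Pauli products: each squares to `1` and is symmetric, and along a row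
`O_{a0} O_{a1} = O_{a2}` while down a column `O_{0b} O_{1b} = -O_{2b}`. These relations say that
summing Alice's `M_{x|a}` over the outputs with `x_b = e` gives exactly `Π^e_{ab}`, and summing Bob's
`N_{y|b}` over `y_a = e` gives the same projector. For the maximally entangled state
`⟨Ψ| A ⊗ B |Ψ⟩ = tr (A Bᵀ) / 4`, so, `Π^e_{ab}` being a symmetric projector, the winning probability is
`∑_e tr (Π^e_{ab}) / 4 = tr 1 / 4 = 1`. -/

namespace Matrix

variable {l m n p α : Type*}

theorem sub_kronecker [NonUnitalNonAssocRing α] (A₁ A₂ : Matrix l m α) (B : Matrix n p α) :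
    (A₁ - A₂) ⊗ₖ B = A₁ ⊗ₖ B - A₂ ⊗ₖ B := by
  ext; simp [sub_mul]

theorem kronecker_sub [NonUnitalNonAssocRing α] (A : Matrix l m α) (B₁ B₂ : Matrix n p α) :
    A ⊗ₖ (B₁ - B₂) = A ⊗ₖ B₁ - A ⊗ₖ B₂ := by
  ext; simp [mul_sub]

theorem neg_kronecker [NonUnitalNonAssocRing α] (A : Matrix l m α) (B : Matrix n p α) :
    (-A) ⊗ₖ B = -(A ⊗ₖ B) := by
  ext; simp

theorem kronecker_neg [NonUnitalNonAssocRing α] (A : Matrix l m α) (B : Matrix n p α) :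
    A ⊗ₖ (-B) = -(A ⊗ₖ B) := by
  ext; simp

theorem transpose_kronecker [Mul α] (A : Matrix l m α) (B : Matrix n p α) :
    (A ⊗ₖ B)ᵀ = Aᵀ ⊗ₖ Bᵀ :=
  (kroneckerMap_transpose _ A B).symm

end Matrix

theorem sum_sum_ite_eq_sum_apply {R M N P ι κ γ : Type*} [CommSemiring R] [AddCommMonoid M]
    [AddCommMonoid N] [AddCommMonoid P] [Module R M] [Module R N] [Module R P]
    [Fintype ι] [Fintype κ] [Fintype γ] [DecidableEq γ]
    (B : M →ₗ[R] N →ₗ[R] P) (f : ι → γ) (g : κ → γ) (m : ι → M) (n : κ → N) :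
    (∑ i, ∑ k, if f i = g k then B (m i) (n k) else 0) =
      ∑ c, B (∑ i, if f i = c then m i else 0) (∑ k, if g k = c then n k else 0) := by
  simp only [map_sum, LinearMap.sum_apply, apply_ite, map_zero, LinearMap.zero_apply,
    DFunLike.ite_apply]
  rw [Finset.sum_comm]
  conv_rhs => rw [Finset.sum_comm]
  simp only [Finset.sum_ite_eq, Finset.mem_univ, if_true]

section HalfOneAdd

variable {K A : Type*} [Field K] [CharZero K] [Ring A] [Algebra K A]

theorem isIdempotentElem_inv_two_smul_one_add {u : A} (hu : u * u = 1) :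
    IsIdempotentElem ((2⁻¹ : K) • (1 + u)) := by
  simp only [IsIdempotentElem, smul_mul_smul, mul_add, add_mul, one_mul, mul_one, hu]
  module

theorem inv_two_smul_one_add_mul (u v : A) :
    (2⁻¹ : K) • (1 + u * v) =
      (2⁻¹ : K) • (1 + u) * (2⁻¹ : K) • (1 + v) +
        (1 - (2⁻¹ : K) • (1 + u)) * (1 - (2⁻¹ : K) • (1 + v)) := by
  simp only [mul_add, add_mul, mul_sub, sub_mul, smul_mul_assoc, mul_smul_comm, one_mul, mul_one]
  module

theorem inv_two_smul_one_sub_mul (u v : A) :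
    (2⁻¹ : K) • (1 - u * v) =
      (2⁻¹ : K) • (1 + u) * (1 - (2⁻¹ : K) • (1 + v)) +
        (1 - (2⁻¹ : K) • (1 + u)) * (2⁻¹ : K) • (1 + v) := by
  simp only [mul_add, add_mul, mul_sub, sub_mul, smul_mul_assoc, mul_smul_comm, one_mul, mul_one]
  module

end HalfOneAdd

section Marginals

variable {R : Type*} [Ring R]

theorem sum_xtrip_eq (p : Fin 3 → R) (hp : p 2 = p 0 * p 1 + (1 - p 0) * (1 - p 1))
    (b : Fin 3) (e : Bool) :
    (∑ x0 : Bool, ∑ x1 : Bool, if xtrip x0 x1 b = e then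
      (if x0 then 1 - p 0 else p 0) * (if x1 then 1 - p 1 else p 1) else 0) =
      if e then 1 - p b else p b := by
  fin_cases b <;> cases e <;> simp [xtrip, hp] <;> noncomm_ring

theorem sum_ytrip_eq (p : Fin 3 → R) (hp : p 2 = p 0 * (1 - p 1) + (1 - p 0) * p 1)
    (a : Fin 3) (e : Bool) :
    (∑ y0 : Bool, ∑ y1 : Bool, if ytrip y0 y1 a = e then
      (if y0 then 1 - p 0 else p 0) * (if y1 then 1 - p 1 else p 1) else 0) =
      if e then 1 - p a else p a := by
  fin_cases a <;> cases e <;> simp [ytrip, hp] <;> noncomm_ring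

end Marginals

section Pauli

open Complex

def pauliX : Matrix (Fin 2) (Fin 2) ℂ := !![0, 1; 1, 0]
def pauliY : Matrix (Fin 2) (Fin 2) ℂ := !![0, -I; I, 0]
def pauliZ : Matrix (Fin 2) (Fin 2) ℂ := !![1, 0; 0, -1]

theorem P0_eq : P0 = (2⁻¹ : ℂ) • (1 + pauliZ) := by
  ext i j; fin_cases i <;> fin_cases j <;> norm_num [P0, pauliZ]

theorem P1_eq : P1 = (2⁻¹ : ℂ) • (1 - pauliZ) := by
  ext i j; fin_cases i <;> fin_cases j <;> norm_num [P1, pauliZ]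

theorem Pp_eq : Pp = (2⁻¹ : ℂ) • (1 + pauliX) := by
  ext i j; fin_cases i <;> fin_cases j <;> norm_num [Pp, pauliX]

theorem Pm_eq : Pm = (2⁻¹ : ℂ) • (1 - pauliX) := by
  ext i j; fin_cases i <;> fin_cases j <;> norm_num [Pm, pauliX]

theorem Ppi_eq : Ppi = (2⁻¹ : ℂ) • (1 + pauliY) := by
  ext i j; fin_cases i <;> fin_cases j <;> norm_num [Ppi, pauliY] <;> ring

theorem Pmi_eq : Pmi = (2⁻¹ : ℂ) • (1 - pauliY) := by
  ext i j; fin_cases i <;> fin_cases j <;> norm_num [Pmi, pauliY] <;> ring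

theorem pauliX_mul_self : pauliX * pauliX = 1 := by
  ext i j; fin_cases i <;> fin_cases j <;> simp [pauliX, mul_apply]

theorem pauliY_mul_self : pauliY * pauliY = 1 := by
  ext i j; fin_cases i <;> fin_cases j <;> simp [pauliY, mul_apply]

theorem pauliZ_mul_self : pauliZ * pauliZ = 1 := by
  ext i j; fin_cases i <;> fin_cases j <;> simp [pauliZ, mul_apply]

theorem pauliZ_mul_pauliX : pauliZ * pauliX = I • pauliY := by
  ext i j; fin_cases i <;> fin_cases j <;> simp [pauliX, pauliY, pauliZ, mul_apply]

theorem pauliX_mul_pauliZ : pauliX * pauliZ = -(I • pauliY) := by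
  ext i j; fin_cases i <;> fin_cases j <;> simp [pauliX, pauliY, pauliZ, mul_apply]

theorem transpose_pauliX : pauliXᵀ = pauliX := by
  ext i j; fin_cases i <;> fin_cases j <;> simp [pauliX]

theorem transpose_pauliY : pauliYᵀ = -pauliY := by
  ext i j; fin_cases i <;> fin_cases j <;> simp [pauliY]

theorem transpose_pauliZ : pauliZᵀ = pauliZ := by
  ext i j; fin_cases i <;> fin_cases j <;> simp [pauliZ]

end Pauli

/-- The Mermin–Peres magic square of two-qubit observables `Π⁰_{ab} - Π¹_{ab}`. -/
def magicObs : Fin 3 → Fin 3 → Matrix (Fin 2 × Fin 2) (Fin 2 × Fin 2) ℂ :=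
  ![![pauliZ ⊗ₖ 1, 1 ⊗ₖ pauliZ, pauliZ ⊗ₖ pauliZ],
    ![1 ⊗ₖ pauliX, pauliX ⊗ₖ 1, pauliX ⊗ₖ pauliX],
    ![-(pauliZ ⊗ₖ pauliX), -(pauliX ⊗ₖ pauliZ), pauliY ⊗ₖ pauliY]]

theorem Pi0_eq (a b : Fin 3) : Pi0 a b = (2⁻¹ : ℂ) • (1 + magicObs a b) := by
  fin_cases a <;> fin_cases b <;>
    simp only [Pi0, magicObs, P0_eq, P1_eq, Pp_eq, Pm_eq, Ppi_eq, Pmi_eq, smul_kronecker,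
      kronecker_smul, add_kronecker, kronecker_add, sub_kronecker, kronecker_sub,
      one_kronecker_one, Fin.zero_eta, Fin.mk_one, Fin.reduceFinMk, cons_val] <;>
    module

theorem magicObs_mul_self (a b : Fin 3) : magicObs a b * magicObs a b = 1 := by
  fin_cases a <;> fin_cases b <;>
    simp [magicObs, ← mul_kronecker_mul, pauliX_mul_self, pauliY_mul_self, pauliZ_mul_self]

theorem transpose_magicObs (a b : Fin 3) : (magicObs a b)ᵀ = magicObs a b := by
  fin_cases a <;> fin_cases b <;>
    simp [magicObs, transpose_kronecker, transpose_pauliX, transpose_pauliY, transpose_pauliZ,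
      neg_kronecker, kronecker_neg]

theorem magicObs_row (a : Fin 3) : magicObs a 0 * magicObs a 1 = magicObs a 2 := by
  fin_cases a <;>
    simp [magicObs, ← mul_kronecker_mul, pauliZ_mul_pauliX, pauliX_mul_pauliZ, kronecker_neg,
      smul_kronecker, kronecker_smul, smul_smul]

theorem magicObs_col (b : Fin 3) : magicObs 0 b * magicObs 1 b = -magicObs 2 b := by
  fin_cases b <;>
    simp [magicObs, ← mul_kronecker_mul, pauliZ_mul_pauliX, smul_kronecker, kronecker_smul,
      smul_smul]

theorem Pi0_row (a : Fin 3) : Pi0 a 2 = Pi0 a 0 * Pi0 a 1 + (1 - Pi0 a 0) * (1 - Pi0 a 1) := by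
  simp only [Pi0_eq, ← magicObs_row]
  exact inv_two_smul_one_add_mul _ _

theorem Pi0_col (b : Fin 3) : Pi0 2 b = Pi0 0 b * (1 - Pi0 1 b) + (1 - Pi0 0 b) * Pi0 1 b := by
  rw [Pi0_eq, ← neg_neg (magicObs 2 b), ← magicObs_col, ← sub_eq_add_neg, Pi0_eq, Pi0_eq]
  exact inv_two_smul_one_sub_mul _ _

theorem isIdempotentElem_Pi0 (a b : Fin 3) : IsIdempotentElem (Pi0 a b) := by
  rw [Pi0_eq]
  exact isIdempotentElem_inv_two_smul_one_add (magicObs_mul_self a b)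

theorem transpose_Pi0 (a b : Fin 3) : (Pi0 a b)ᵀ = Pi0 a b := by
  rw [Pi0_eq, transpose_smul, transpose_add, transpose_one, transpose_magicObs]

theorem sum_Mms_xtrip_eq (a b : Fin 3) (e : Bool) :
    (∑ x0 : Bool, ∑ x1 : Bool, if xtrip x0 x1 b = e then Mms a x0 x1 else 0) = Pi' e a b :=
  sum_xtrip_eq (Pi0 a) (Pi0_row a) b e

theorem sum_Nms_ytrip_eq (a b : Fin 3) (e : Bool) :
    (∑ y0 : Bool, ∑ y1 : Bool, if ytrip y0 y1 a = e then Nms b y0 y1 else 0) = Pi' e a b :=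
  sum_ytrip_eq (Pi0 · b) (Pi0_col b) a e

theorem expecMS_kronecker (A B : Matrix (Fin 2 × Fin 2) (Fin 2 × Fin 2) ℂ) :
    expecMS (A ⊗ₖ B) = trace (A * Bᵀ) / 4 := by
  simp only [expecMS, dotProduct, Pi.star_apply, PsiMS, one_div, RCLike.star_def, mulVec,
    kroneckerMap_apply, mul_ite, mul_zero, Fintype.sum_prod_type, Finset.sum_ite_eq,
    Finset.mem_univ, ↓reduceIte, Fin.sum_univ_two, Prod.mk.injEq, and_true, zero_ne_one,
    and_false, map_zero, zero_mul, add_zero, one_ne_zero, zero_add, map_inv₀, Complex.conj_ofNat,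
    trace, diag_apply, mul_apply, transpose_apply]
  ring

theorem sum_expecMS_kronecker_self {p : Matrix (Fin 2 × Fin 2) (Fin 2 × Fin 2) ℂ}
    (hp : IsIdempotentElem p) (hpt : pᵀ = p) :
    ∑ e : Bool, expecMS ((if e then 1 - p else p) ⊗ₖ (if e then 1 - p else p)) = 1 := by
  simp only [Fintype.sum_bool, if_true, Bool.false_eq_true, if_false, expecMS_kronecker,
    transpose_sub, transpose_one, hpt, hp.eq, hp.one_sub.eq]
  rw [← add_div, ← trace_add, sub_add_cancel, trace_one]
  norm_num

noncomputable def expecKroneckerBilin :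
    Matrix (Fin 2 × Fin 2) (Fin 2 × Fin 2) ℂ →ₗ[ℂ]
      Matrix (Fin 2 × Fin 2) (Fin 2 × Fin 2) ℂ →ₗ[ℂ] ℂ :=
  LinearMap.mk₂ ℂ (fun A B => expecMS (A ⊗ₖ B))
    (by intros; simp [expecMS_kronecker, add_mul, add_div])
    (by intros; simp [expecMS_kronecker, mul_div_assoc])
    (by intros; simp [expecMS_kronecker, mul_add, add_div])
    (by intros; simp [expecMS_kronecker, mul_div_assoc])

/-- The ideal magic square strategy wins the game with probability 1 on every
input pair `(a, b)`: summing `⟨Ψ| M_{x₀x₁|a} ⊗ N_{y₀y₁|b} |Ψ⟩` over all winning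
output combinations gives 1. -/
theorem stmt_8 :
    ∀ a b : Fin 3,
      (∑ x0 : Bool, ∑ x1 : Bool, ∑ y0 : Bool, ∑ y1 : Bool,
        if xtrip x0 x1 b = ytrip y0 y1 a
          then expecMS (Mms a x0 x1 ⊗ₖ Nms b y0 y1) else 0) = 1 := by
  intro a b
  have h := sum_sum_ite_eq_sum_apply expecKroneckerBilin (fun x : Bool × Bool => xtrip x.1 x.2 b)
    (fun y : Bool × Bool => ytrip y.1 y.2 a) (fun x => Mms a x.1 x.2) (fun y => Nms b y.1 y.2)
  simp only [Fintype.sum_prod_type, expecKroneckerBilin, LinearMap.mk₂_apply] at h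
  rw [h]
  simp only [sum_Mms_xtrip_eq, sum_Nms_ytrip_eq]
  exact sum_expecMS_kronecker_self (isIdempotentElem_Pi0 a b) (transpose_Pi0 a b)
end

section
/- Let d_A, d_B ≥ 1. For each a ∈ {0,1,2} let {M_{x₀x₁|a}}_{(x₀,x₁)∈{0,1}²} be positive semidefinite d_A×d_A complex matrices with ∑_{x₀x₁} M_{x₀x₁|a} = I, and for each b ∈ {0,1,2} let {N_{y₀y₁|b}}_{(y₀,y₁)∈{0,1}²} be positive semidefinite d_B×d_B complex matrices with ∑_{y₀y₁} N_{y₀y₁|b} = I. Let ρ ∈ ℂ^{d_A}⊗ℂ^{d_B} be a unit vector, and suppose the strategy wins the magic square game with probability at least 1−ε, i.e., (1/9)·∑_{a,b∈{0,1,2}} ∑_{(x₀,x₁),(y₀,y₁): x_b = y_a} ⟨ρ| (M_{x₀x₁|a} ⊗ N_{y₀y₁|b}) |ρ⟩ ≥ 1 − ε, where x = (x₀, x₁, x₀⊕x₁) and y = (y₀, y₁, y₀⊕y₁⊕1). Then Re⟨ρ| (X₁ ⊗ X₃) |ρ⟩ ≥ 1 − 18ε, where X₁ = ∑_{(x₀,x₁)}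 (−1)^{x₁} M_{x₀x₁|1} and X₃ = ∑_{(y₀,y₁)} (−1)^{y₁} N_{y₀y₁|1}. -/
open Matrix
open scoped Matrix Kronecker ComplexOrder

/-!
Each of the nine input pairs is won with probability at most 1, so if their average is at least
`1 - ε`, every single pair is won with probability at least `1 - 9ε`. At the input pair `(1, 1)`
the winning condition is `x₁ = y₁`, and the correlator of the `±1`-valued observables `X₁`, `X₃`
is `P(x₁ = y₁) - P(x₁ ≠ y₁) = 2 P(x₁ = y₁) - 1 ≥ 1 - 18ε`.
-/

namespace Matrix

theorem sum_kronecker_sum {R l m n p α β : Type*} [NonUnitalNonAssocSemiring R] [Fintype α]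
    [Fintype β] (A : α → Matrix l m R) (B : β → Matrix n p R) :
    (∑ x, A x) ⊗ₖ (∑ y, B y) = ∑ x, ∑ y, A x ⊗ₖ B y := by
  ext ⟨i, i'⟩ ⟨j, j'⟩
  simp only [kronecker_apply, sum_apply, Finset.sum_mul_sum]

end Matrix

section Probability

theorem le_of_one_sub_le_inv_card_mul_sum {ι : Type*} [Fintype ι] {w : ι → ℝ}
    (hw : ∀ i, w i ≤ 1) {ε : ℝ} (h : 1 - ε ≤ (Fintype.card ι : ℝ)⁻¹ * ∑ i, w i) (i : ι) :
    1 - Fintype.card ι * ε ≤ w i := by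
  have hcard : (0 : ℝ) < Fintype.card ι := by exact_mod_cast Fintype.card_pos_iff.mpr ⟨i⟩
  have hsum : (Fintype.card ι : ℝ) - ∑ j, w j ≤ Fintype.card ι * ε := by
    rw [inv_mul_eq_div, le_div_iff₀ hcard] at h
    linarith
  have hi : 1 - w i ≤ ∑ j, (1 - w j) :=
    Finset.single_le_sum (f := fun j => 1 - w j) (fun j _ => sub_nonneg.mpr (hw j))
      (Finset.mem_univ i)
  rw [Finset.sum_sub_distrib, Finset.sum_const, Finset.card_univ, nsmul_one] at hi
  linarith

variable {α β : Type*} [Fintype α] [Fintype β] {p : α → β → ℝ}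

theorem sum_sum_ite_le_one (hp : ∀ x y, 0 ≤ p x y) (h1 : ∑ x, ∑ y, p x y = 1)
    (E : α → β → Prop) [∀ x y, Decidable (E x y)] :
    ∑ x, ∑ y, (if E x y then p x y else 0) ≤ 1 :=
  h1 ▸ Finset.sum_le_sum fun x _ => Finset.sum_le_sum fun y _ => by
    split_ifs
    exacts [le_rfl, hp x y]

theorem sum_sum_sign_mul_sign_mul (h1 : ∑ x, ∑ y, p x y = 1) (s : α → Bool) (t : β → Bool) :
    ∑ x, ∑ y, (if s x then -1 else 1) * (if t y then -1 else 1) * p x y =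
      2 * ∑ x, ∑ y, (if s x = t y then p x y else 0) - 1 := by
  have key : ∀ x y, (if s x then -1 else 1) * (if t y then -1 else 1) * p x y =
      2 * (if s x = t y then p x y else 0) - p x y := by
    intro x y
    cases s x <;> cases t y <;> norm_num <;> ring
  simp only [key, Finset.sum_sub_distrib, ← Finset.mul_sum, h1]

end Probability

section Kronecker

variable {m n α β : Type*} [Fintype m] [Fintype n] [Fintype α] [Fintype β]

theorem star_dotProduct_self_eq_one {ρ : m → ℂ} (hρ : ∑ i, ‖ρ i‖ ^ 2 = 1) :
    star ρ ⬝ᵥ ρ = 1 := by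
  simp only [dotProduct, Pi.star_apply, Complex.star_def, Complex.conj_mul']
  exact_mod_cast hρ

theorem re_star_dotProduct_kronecker_mulVec_nonneg {A : Matrix m m ℂ} {B : Matrix n n ℂ}
    (hA : A.PosSemidef) (hB : B.PosSemidef) (ρ : m × n → ℂ) :
    0 ≤ (star ρ ⬝ᵥ ((A ⊗ₖ B) *ᵥ ρ)).re :=
  (Complex.nonneg_iff.mp ((hA.kronecker hB).dotProduct_mulVec_nonneg ρ)).1

theorem sum_sum_star_dotProduct_kronecker_mulVec (A : α → Matrix m m ℂ) (B : β → Matrix n n ℂ)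
    (ρ : m × n → ℂ) :
    ∑ x, ∑ y, star ρ ⬝ᵥ ((A x ⊗ₖ B y) *ᵥ ρ) = star ρ ⬝ᵥ (((∑ x, A x) ⊗ₖ ∑ y, B y) *ᵥ ρ) := by
  simp only [sum_kronecker_sum, sum_mulVec, dotProduct_sum]

theorem sum_sum_re_star_dotProduct_kronecker_mulVec_eq_one [DecidableEq m] [DecidableEq n]
    {A : α → Matrix m m ℂ} {B : β → Matrix n n ℂ} (hA : ∑ x, A x = 1) (hB : ∑ y, B y = 1)
    {ρ : m × n → ℂ} (hρ : ∑ i, ‖ρ i‖ ^ 2 = 1) :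
    ∑ x, ∑ y, (star ρ ⬝ᵥ ((A x ⊗ₖ B y) *ᵥ ρ)).re = 1 := by
  simp only [← Complex.re_sum, sum_sum_star_dotProduct_kronecker_mulVec, hA, hB,
    one_kronecker_one, one_mulVec, star_dotProduct_self_eq_one hρ, Complex.one_re]

theorem correlator_eq_two_mul_agreement_sub_one [DecidableEq m] [DecidableEq n]
    {A : α → Matrix m m ℂ} {B : β → Matrix n n ℂ} (hA : ∑ x, A x = 1) (hB : ∑ y, B y = 1)
    {ρ : m × n → ℂ} (hρ : ∑ i, ‖ρ i‖ ^ 2 = 1) (s : α → Bool) (t : β → Bool) :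
    (star ρ ⬝ᵥ (((∑ x, (if s x then (-1 : ℂ) else 1) • A x) ⊗ₖ
        ∑ y, (if t y then (-1 : ℂ) else 1) • B y) *ᵥ ρ)).re =
      2 * ∑ x, ∑ y, (if s x = t y then (star ρ ⬝ᵥ ((A x ⊗ₖ B y) *ᵥ ρ)).re else 0) - 1 := by
  rw [← sum_sum_sign_mul_sign_mul (sum_sum_re_star_dotProduct_kronecker_mulVec_eq_one hA hB hρ),
    ← sum_sum_star_dotProduct_kronecker_mulVec, Complex.re_sum]
  refine Finset.sum_congr rfl fun x _ => ?_
  rw [Complex.re_sum]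
  refine Finset.sum_congr rfl fun y _ => ?_
  cases s x <;> cases t y <;> simp [smul_kronecker, kronecker_smul, smul_mulVec, -neg_smul]

end Kronecker

theorem xtrip_eq_ytrip_one_iff (x0 x1 y0 y1 : Bool) : xtrip x0 x1 1 = ytrip y0 y1 1 ↔ x1 = y1 :=
  Iff.rfl

theorem stmt_17_general
    (dA dB : ℕ) (ε : ℝ)
    (M : Fin 3 → Bool → Bool → Matrix (Fin dA) (Fin dA) ℂ)
    (N : Fin 3 → Bool → Bool → Matrix (Fin dB) (Fin dB) ℂ)
    (hMpsd : ∀ a x0 x1, (M a x0 x1).PosSemidef)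
    (hMsum : ∀ a, ∑ x0 : Bool, ∑ x1 : Bool, M a x0 x1 = 1)
    (hNpsd : ∀ b y0 y1, (N b y0 y1).PosSemidef)
    (hNsum : ∀ b, ∑ y0 : Bool, ∑ y1 : Bool, N b y0 y1 = 1)
    (ρ : Fin dA × Fin dB → ℂ) (hρ : ∑ p, ‖ρ p‖ ^ 2 = 1)
    (hwin : 1 - ε ≤
      ((1 / 9 : ℂ) * ∑ a : Fin 3, ∑ b : Fin 3,
        ∑ x0 : Bool, ∑ x1 : Bool, ∑ y0 : Bool, ∑ y1 : Bool,
          if xtrip x0 x1 b = ytrip y0 y1 a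
            then star ρ ⬝ᵥ ((M a x0 x1 ⊗ₖ N b y0 y1) *ᵥ ρ) else 0).re) :
    1 - 18 * ε ≤
      (star ρ ⬝ᵥ
        (((∑ x0 : Bool, ∑ x1 : Bool, (if x1 then (-1 : ℂ) else 1) • M 1 x0 x1) ⊗ₖ
          (∑ y0 : Bool, ∑ y1 : Bool, (if y1 then (-1 : ℂ) else 1) • N 1 y0 y1)) *ᵥ ρ)).re := by
  have hM (a : Fin 3) : ∑ x : Bool × Bool, M a x.1 x.2 = 1 :=
    (Fintype.sum_prod_type' _).trans (hMsum a)
  have hN (b : Fin 3) : ∑ y : Bool × Bool, N b y.1 y.2 = 1 :=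
    (Fintype.sum_prod_type' _).trans (hNsum b)
  set W : Fin 3 × Fin 3 → ℝ := fun ab => ∑ x : Bool × Bool, ∑ y : Bool × Bool,
    if xtrip x.1 x.2 ab.2 = ytrip y.1 y.2 ab.1
      then (star ρ ⬝ᵥ ((M ab.1 x.1 x.2 ⊗ₖ N ab.2 y.1 y.2) *ᵥ ρ)).re else 0 with hW
  have hW_le (ab : Fin 3 × Fin 3) : W ab ≤ 1 :=
    sum_sum_ite_le_one (fun _ _ => re_star_dotProduct_kronecker_mulVec_nonneg
      (hMpsd _ _ _) (hNpsd _ _ _) ρ)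
      (sum_sum_re_star_dotProduct_kronecker_mulVec_eq_one (hM _) (hN _) hρ) _
  have hW_avg : 1 - ε ≤ (Fintype.card (Fin 3 × Fin 3) : ℝ)⁻¹ * ∑ ab, W ab := by
    convert hwin using 1
    simp [hW, Complex.re_sum, apply_ite Complex.re, Fintype.sum_prod_type]
  have hW11 : 1 - 9 * ε ≤ W (1, 1) := by
    simpa using le_of_one_sub_le_inv_card_mul_sum hW_le hW_avg (1, 1)
  rw [← Fintype.sum_prod_type', ← Fintype.sum_prod_type',
    correlator_eq_two_mul_agreement_sub_one (hM 1) (hN 1) hρ]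
  simp only [hW, xtrip_eq_ytrip_one_iff] at hW11
  linarith

/-- Derivation of Eq. (37) in Appendix B: a quantum strategy (POVMs `M`, `N` and
a shared unit vector `ρ`) winning the magic square game with probability at
least `1 − ε` satisfies the correlation bound `Re⟨ρ| X₁ ⊗ X₃ |ρ⟩ ≥ 1 − 18ε`,
where `X₁ = ∑ (−1)^{x₁} M_{x₀x₁|1}` and `X₃ = ∑ (−1)^{y₁} N_{y₀y₁|1}`. -/
theorem stmt_17
    (dA dB : ℕ) (hdA : 1 ≤ dA) (hdB : 1 ≤ dB) (ε : ℝ)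
    (M : Fin 3 → Bool → Bool → Matrix (Fin dA) (Fin dA) ℂ)
    (N : Fin 3 → Bool → Bool → Matrix (Fin dB) (Fin dB) ℂ)
    (hMpsd : ∀ a x0 x1, (M a x0 x1).PosSemidef)
    (hMsum : ∀ a, ∑ x0 : Bool, ∑ x1 : Bool, M a x0 x1 = 1)
    (hNpsd : ∀ b y0 y1, (N b y0 y1).PosSemidef)
    (hNsum : ∀ b, ∑ y0 : Bool, ∑ y1 : Bool, N b y0 y1 = 1)
    (ρ : Fin dA × Fin dB → ℂ) (hρ : ∑ p, ‖ρ p‖ ^ 2 = 1)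
    (hwin : 1 - ε ≤
      ((1 / 9 : ℂ) * ∑ a : Fin 3, ∑ b : Fin 3,
        ∑ x0 : Bool, ∑ x1 : Bool, ∑ y0 : Bool, ∑ y1 : Bool,
          if xtrip x0 x1 b = ytrip y0 y1 a
            then star ρ ⬝ᵥ ((M a x0 x1 ⊗ₖ N b y0 y1) *ᵥ ρ) else 0).re) :
    1 - 18 * ε ≤
      (star ρ ⬝ᵥ
        (((∑ x0 : Bool, ∑ x1 : Bool, (if x1 then (-1 : ℂ) else 1) • M 1 x0 x1) ⊗ₖ
          (∑ y0 : Bool, ∑ y1 : Bool, (if y1 then (-1 : ℂ) else 1) • N 1 y0 y1)) *ᵥ ρ)).re :=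
  stmt_17_general dA dB ε M N hMpsd hMsum hNpsd hNsum ρ hρ hwin
end
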